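/- arXiv:2501.07791 — 3 statements merged into one kernel-verified Lean document; each statement's English description precedes it below -/
import Mathlib

section
/- For every prime p, the group G_p is residually finite: for every g ∈ G_p with g ≠ 1 there exist a finite group Q and a group homomorphism φ : G_p → Q with φ(g) ≠ 1. -/
open Filter Topology

/-- `ℤ[1/p]` as an additive subgroup of `ℚ`: rationals of the form `k / p^n`. -/
def Zp (p : ℕ) : AddSubgroup ℚ where
  carrier := {q : ℚ | ∃ (k : ℤ) (n : ℕ), q * (p : ℚ) ^ n = (k : ℚ)}
  zero_mem' := ⟨0, 0, by norm_num⟩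
  add_mem' := by
    rintro a b ⟨k1, n1, h1⟩ ⟨k2, n2, h2⟩
    refine ⟨k1 * (p : ℤ) ^ n2 + k2 * (p : ℤ) ^ n1, n1 + n2, ?_⟩
    push_cast
    calc (a + b) * (p : ℚ) ^ (n1 + n2)
        = a * (p : ℚ) ^ n1 * (p : ℚ) ^ n2 + b * (p : ℚ) ^ n2 * (p : ℚ) ^ n1 := by
          rw [pow_add]; ring
      _ = (k1 : ℚ) * (p : ℚ) ^ n2 + (k2 : ℚ) * (p : ℚ) ^ n1 := by rw [h1, h2]
  neg_mem' := by
    rintro a ⟨k, n, h⟩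
    refine ⟨-k, n, ?_⟩
    push_cast
    rw [neg_mul, h]

lemma one_mem_Zp (p : ℕ) : (1 : ℚ) ∈ Zp p := ⟨1, 0, by norm_num⟩

/-- The group `G_p = ℤ[1/p]² ⋊ ℤ`, realized as triples `(a, b, c)` with the
multiplication `(a₁,b₁,c₁)(a₂,b₂,c₂) = (a₁+a₂+c₁b₂, b₁+b₂, c₁+c₂)`. -/
abbrev Gp (p : ℕ) : Type := Zp p × Zp p × ℤ

instance Gp.instGroup (p : ℕ) : Group (Gp p) where
  mul x y := ⟨x.1 + y.1 + x.2.2 • y.2.1, x.2.1 + y.2.1, x.2.2 + y.2.2⟩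
  one := ⟨0, 0, 0⟩
  inv x := ⟨-x.1 + x.2.2 • x.2.1, -x.2.1, -x.2.2⟩
  mul_assoc x y z := by
    refine Prod.ext ?_ (Prod.ext ?_ ?_)
    · show x.1 + y.1 + x.2.2 • y.2.1 + z.1 + (x.2.2 + y.2.2) • z.2.1 =
        x.1 + (y.1 + z.1 + y.2.2 • z.2.1) + x.2.2 • (y.2.1 + z.2.1)
      rw [add_smul, smul_add]; abel
    · show x.2.1 + y.2.1 + z.2.1 = x.2.1 + (y.2.1 + z.2.1)
      rw [add_assoc]
    · show x.2.2 + y.2.2 + z.2.2 = x.2.2 + (y.2.2 + z.2.2)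
      rw [add_assoc]
  one_mul x := by
    refine Prod.ext ?_ (Prod.ext ?_ ?_)
    · show 0 + x.1 + (0 : ℤ) • x.2.1 = x.1
      simp
    · show 0 + x.2.1 = x.2.1
      simp
    · show 0 + x.2.2 = x.2.2
      simp
  mul_one x := by
    refine Prod.ext ?_ (Prod.ext ?_ ?_)
    · show x.1 + 0 + x.2.2 • (0 : Zp p) = x.1
      simp
    · show x.2.1 + 0 = x.2.1
      simp
    · show x.2.2 + 0 = x.2.2
      simp
  inv_mul_cancel x := by
    refine Prod.ext ?_ (Prod.ext ?_ ?_)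
    · show -x.1 + x.2.2 • x.2.1 + x.1 + (-x.2.2) • x.2.1 = 0
      rw [neg_smul]; abel
    · show -x.2.1 + x.2.1 = 0
      simp
    · show -x.2.2 + x.2.2 = 0
      simp


section ResFinAux

lemma Zp.exists_rep {p : ℕ} (q : Zp p) :
    ∃ (k : ℤ) (n : ℕ), (q : ℚ) * (p : ℚ) ^ n = (k : ℚ) := q.2

noncomputable def wk {p : ℕ} (q : Zp p) : ℤ := (Zp.exists_rep q).choose
noncomputable def wn {p : ℕ} (q : Zp p) : ℕ := (Zp.exists_rep q).choose_spec.choose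

lemma wspec {p : ℕ} (q : Zp p) : (q : ℚ) * (p : ℚ) ^ (wn q) = (wk q : ℚ) :=
  (Zp.exists_rep q).choose_spec.choose_spec

def H (m : ℕ) : Type := ZMod m × ZMod m × ZMod m

instance H.instGroup (m : ℕ) : Group (H m) where
  mul x y := (x.1 + y.1 + x.2.2 * y.2.1, x.2.1 + y.2.1, x.2.2 + y.2.2)
  one := ((0 : ZMod m), (0 : ZMod m), (0 : ZMod m))
  inv x := (-x.1 + x.2.2 * x.2.1, -x.2.1, -x.2.2)
  mul_assoc x y z := by
    refine Prod.ext ?_ (Prod.ext ?_ ?_)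
    · show x.1 + y.1 + x.2.2 * y.2.1 + z.1 + (x.2.2 + y.2.2) * z.2.1 =
        x.1 + (y.1 + z.1 + y.2.2 * z.2.1) + x.2.2 * (y.2.1 + z.2.1)
      ring
    · show x.2.1 + y.2.1 + z.2.1 = x.2.1 + (y.2.1 + z.2.1)
      rw [add_assoc]
    · show x.2.2 + y.2.2 + z.2.2 = x.2.2 + (y.2.2 + z.2.2)
      rw [add_assoc]
  one_mul x := by
    refine Prod.ext ?_ (Prod.ext ?_ ?_)
    · show 0 + x.1 + (0 : ZMod m) * x.2.1 = x.1
      ring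
    · show 0 + x.2.1 = x.2.1
      simp
    · show 0 + x.2.2 = x.2.2
      simp
  mul_one x := by
    refine Prod.ext ?_ (Prod.ext ?_ ?_)
    · show x.1 + 0 + x.2.2 * (0 : ZMod m) = x.1
      ring
    · show x.2.1 + 0 = x.2.1
      simp
    · show x.2.2 + 0 = x.2.2
      simp
  inv_mul_cancel x := by
    refine Prod.ext ?_ (Prod.ext ?_ ?_)
    · show -x.1 + x.2.2 * x.2.1 + x.1 + (-x.2.2) * x.2.1 = 0
      ring
    · show -x.2.1 + x.2.1 = 0
      simp
    · show -x.2.2 + x.2.2 = 0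
      simp

instance H.instFintype (m : ℕ) [NeZero m] : Fintype (H m) := by
  unfold H; infer_instance

lemma fval_eq {p ℓ : ℕ} [Fact ℓ.Prime] (hpl : (p : ZMod ℓ) ≠ 0)
    (q : Zp p) (k : ℤ) (n : ℕ) (h : (q : ℚ) * (p : ℚ) ^ n = (k : ℚ)) :
    (wk q : ZMod ℓ) * ((p : ZMod ℓ) ^ wn q)⁻¹ = (k : ZMod ℓ) * ((p : ZMod ℓ) ^ n)⁻¹ := by
  have key : (wk q) * (p : ℤ) ^ n = k * (p : ℤ) ^ wn q := by
    have h2 : (wk q : ℚ) * (p : ℚ) ^ n = (k : ℚ) * (p : ℚ) ^ (wn q) := by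
      rw [← wspec q, ← h]; ring
    exact_mod_cast h2
  have key2 : (wk q : ZMod ℓ) * (p : ZMod ℓ) ^ n = (k : ZMod ℓ) * (p : ZMod ℓ) ^ (wn q) := by
    have := congrArg (fun z : ℤ => (z : ZMod ℓ)) key
    push_cast at this
    exact this
  have h1 : (p : ZMod ℓ) ^ n ≠ 0 := pow_ne_zero _ hpl
  have h2 : (p : ZMod ℓ) ^ (wn q) ≠ 0 := pow_ne_zero _ hpl
  field_simp
  linear_combination key2

noncomputable def fHom (p ℓ : ℕ) [Fact ℓ.Prime] (hpl : (p : ZMod ℓ) ≠ 0) :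
    Zp p →+ ZMod ℓ :=
  AddMonoidHom.mk' (fun q => (wk q : ZMod ℓ) * ((p : ZMod ℓ) ^ wn q)⁻¹) (by
    intro a b
    have h : ((a + b : Zp p) : ℚ) * (p : ℚ) ^ (wn a + wn b) =
        ((wk a * (p : ℤ) ^ wn b + wk b * (p : ℤ) ^ wn a : ℤ) : ℚ) := by
      push_cast
      rw [pow_add]
      linear_combination (p : ℚ) ^ (wn b) * wspec a + (p : ℚ) ^ (wn a) * wspec b
    show (wk (a + b) : ZMod ℓ) * ((p : ZMod ℓ) ^ wn (a + b))⁻¹ = _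
    rw [fval_eq hpl (a + b) _ _ h]
    have h1 : (p : ZMod ℓ) ^ (wn a) ≠ 0 := pow_ne_zero _ hpl
    have h2 : (p : ZMod ℓ) ^ (wn b) ≠ 0 := pow_ne_zero _ hpl
    push_cast
    rw [pow_add]
    field_simp)

lemma fHom_apply {p ℓ : ℕ} [Fact ℓ.Prime] (hpl : (p : ZMod ℓ) ≠ 0) (q : Zp p) :
    fHom p ℓ hpl q = (wk q : ZMod ℓ) * ((p : ZMod ℓ) ^ wn q)⁻¹ := rfl

noncomputable def phi (p ℓ : ℕ) [Fact ℓ.Prime] (hpl : (p : ZMod ℓ) ≠ 0) :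
    Gp p →* H ℓ :=
  MonoidHom.mk' (fun g => (fHom p ℓ hpl g.1, fHom p ℓ hpl g.2.1, (g.2.2 : ZMod ℓ))) (by
    intro x y
    refine Prod.ext ?_ (Prod.ext ?_ ?_)
    · show fHom p ℓ hpl (x.1 + y.1 + x.2.2 • y.2.1) =
        fHom p ℓ hpl x.1 + fHom p ℓ hpl y.1 + (x.2.2 : ZMod ℓ) * fHom p ℓ hpl y.2.1
      rw [map_add, map_add, map_zsmul, zsmul_eq_mul]
    · show fHom p ℓ hpl (x.2.1 + y.2.1) = fHom p ℓ hpl x.2.1 + fHom p ℓ hpl y.2.1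
      rw [map_add]
    · show ((x.2.2 + y.2.2 : ℤ) : ZMod ℓ) = (x.2.2 : ZMod ℓ) + (y.2.2 : ZMod ℓ)
      push_cast
      ring)

lemma phi_apply {p ℓ : ℕ} [Fact ℓ.Prime] (hpl : (p : ZMod ℓ) ≠ 0) (g : Gp p) :
    phi p ℓ hpl g = (fHom p ℓ hpl g.1, fHom p ℓ hpl g.2.1, (g.2.2 : ZMod ℓ)) := rfl

end ResFinAux

/-- `G_p` is residually finite. -/
theorem Gp_residually_finite (p : ℕ) (hp : p.Prime) :
    ∀ g : Gp p, g ≠ 1 →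
      ∃ (Q : Type) (_ : Fintype Q) (_ : Group Q) (φ : Gp p →* Q), φ g ≠ 1 := by
  intro g hg
  obtain ⟨ℓ, hle, hℓ⟩ := Nat.exists_infinite_primes
    (p + (wk g.1).natAbs + (wk g.2.1).natAbs + g.2.2.natAbs + 1)
  haveI := Fact.mk hℓ
  haveI : NeZero ℓ := ⟨hℓ.ne_zero⟩
  have hpl : (p : ZMod ℓ) ≠ 0 := by
    intro h0
    rw [ZMod.natCast_eq_zero_iff] at h0
    have := Nat.le_of_dvd hp.pos h0
    omega
  have hcast : ∀ k : ℤ, k ≠ 0 → k.natAbs + 1 ≤ ℓ → ((k : ZMod ℓ)) ≠ 0 := by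
    intro k hk hlt h0
    rw [ZMod.intCast_zmod_eq_zero_iff_dvd] at h0
    have h1 : ℓ ∣ k.natAbs := by
      have := Int.natAbs_dvd_natAbs.mpr h0
      simpa using this
    have := Nat.le_of_dvd (Int.natAbs_pos.mpr hk) h1
    omega
  have hwk : ∀ q : Zp p, q ≠ 0 → wk q ≠ 0 := by
    intro q hq hw
    apply hq
    have hs := wspec q
    rw [hw] at hs
    have hq0 : (q : ℚ) = 0 := by
      have hpow : (p : ℚ) ^ (wn q) ≠ 0 :=
        pow_ne_zero _ (by exact_mod_cast hp.ne_zero)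
      rcases mul_eq_zero.mp hs with hs' | hs'
      · exact hs'
      · exact absurd hs' hpow
    exact Subtype.ext hq0
  have hfne : ∀ q : Zp p, q ≠ 0 → (wk q).natAbs + 1 ≤ ℓ → fHom p ℓ hpl q ≠ 0 := by
    intro q hq hb h0
    rw [fHom_apply] at h0
    rcases mul_eq_zero.mp h0 with h | h
    · exact hcast _ (hwk q hq) hb h
    · exact inv_ne_zero (pow_ne_zero _ hpl) h
  have hcomp : g.1 ≠ 0 ∨ g.2.1 ≠ 0 ∨ g.2.2 ≠ 0 := by
    by_contra hc
    push_neg at hc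
    obtain ⟨h1, h2, h3⟩ := hc
    exact hg (Prod.ext h1 (Prod.ext h2 h3))
  refine ⟨H ℓ, inferInstance, inferInstance, phi p ℓ hpl, ?_⟩
  intro heq
  rw [phi_apply] at heq
  rcases hcomp with h | h | h
  · exact hfne g.1 h (by omega) (congrArg (fun z : H ℓ => z.1) heq)
  · exact hfne g.2.1 h (by omega) (congrArg (fun z : H ℓ => z.2.1) heq)
  · exact hcast g.2.2 h (by omega) (congrArg (fun z : H ℓ => z.2.2) heq)
end

section
/- Let p be a prime and let H_p = {(a,b,0) ∈ G_p : a, b ∈ ℤ} be the subgroup of G_p generated by (1,0,0) and (0,1,0). Define τ : G_p → ℂ by τ(g) = 1 if g ∈ H_p and τ(g) = 0 otherwise. Then τ is not a pointwise limit of finite-dimensional traces: there is no sequence of positive integers (n_k) and group homomorphisms π_k : G_p → U(n_k) such that Tr_{n_k}(π_k(g)) → τ(g) for every g ∈ G_p. -/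
open Filter Topology

/-- The normalized trace of an `n × n` complex matrix (`trN n 1 = 1`). -/
noncomputable def trN (n : ℕ) (A : Matrix (Fin n) (Fin n) ℂ) : ℂ :=
  A.trace / n

/-- The subgroup `H_p = {(a, b, 0) : a, b ∈ ℤ} ≤ G_p` (generated by `(1,0,0)` and
`(0,1,0)`), as a set. -/
def HpSet (p : ℕ) : Set (Gp p) :=
  {g | (∃ k : ℤ, (g.1 : ℚ) = (k : ℚ)) ∧ (∃ k : ℤ, (g.2.1 : ℚ) = (k : ℚ)) ∧ g.2.2 = 0}

/-!
Write `z m = (p⁻ᵐ, 0, 0)`, `w m = (0, p⁻ᵐ, 0)` and `t = (0, 0, 1)`. The `z m` are central,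
`z (m + 1) ^ p = z m`, and `t (w m) t⁻¹ (w m)⁻¹ = z m`. In a finite-dimensional representation,
taking determinants on an eigenspace of `z m` shows that its eigenvalues are roots of unity of
order at most the dimension. An eigenvalue of `z 1` has `p ^ s`-th roots among the eigenvalues
of `z (1 + s)`, so it cannot be a nontrivial `p`-th root of unity; hence `z 1` acts trivially on
the fixed space `U` of `z 0`. On `Uᗮ` the element `z 0` has no fixed vector, while conjugation
by `t ^ l` gives `χ (z 0 ^ l * w 0) = χ (w 0)`; evaluating the minimal polynomial of `z 0` at `1`
then forces `χ_{Uᗮ} (w 0) = 0`. For a unitary representation this yields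
`2 ‖χ (w 0)‖ - dim ≤ re χ (z 1)`, which is `1 ≤ 0` in the limit if the normalized traces
converge to the indicator of `H_p`.
-/

open scoped InnerProductSpace

theorem pow_prime_pow_eq_one_of_pow_eq_one {M : Type*} [Monoid M] {x : M} {p n s d : ℕ}
    (hp : p.Prime) (hx : x ^ p ^ n = 1) (hd : 0 < d) (hxd : x ^ d = 1) (hds : d < p ^ s) :
    x ^ p ^ s = 1 := by
  obtain ⟨i, -, hi⟩ := (Nat.dvd_prime_pow hp).mp (orderOf_dvd_of_pow_eq_one hx)
  have his : p ^ i < p ^ s := hi ▸ (orderOf_le_of_pow_eq_one hd hxd).trans_lt hds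
  rw [← orderOf_dvd_iff_pow_eq_one, hi]
  exact pow_dvd_pow p ((Nat.pow_lt_pow_iff_right hp.one_lt).mp his).le

namespace Module.End

variable {K V : Type*} [Field K] [AddCommGroup V] [Module K V]

theorem HasEigenvector.of_restrict {f : End K V} {p : Submodule K V} (hp : ∀ x ∈ p, f x ∈ p)
    {μ : K} {u : p} (h : HasEigenvector (f.restrict hp) μ u) : f.HasEigenvector μ u :=
  ⟨mem_eigenspace_iff.mpr (congrArg Subtype.val h.apply_eq_smul), by exact_mod_cast h.2⟩

variable [FiniteDimensional K V]

theorem pow_finrank_eq_one_of_mul_eq_smul_mul {f g : End K V} (hf : IsUnit f) (hg : IsUnit g)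
    {ζ : K} (h : f * g = ζ • (g * f)) : ζ ^ finrank K V = 1 := by
  have hdet : (f * g).det ≠ 0 := (LinearMap.isUnit_iff_isUnit_det _).mp (hf.mul hg) |>.ne_zero
  have := congrArg LinearMap.det h
  rw [LinearMap.det_smul, map_mul, map_mul, mul_comm g.det] at this
  rw [map_mul] at hdet
  exact (mul_eq_right₀ hdet).mp this.symm

theorem trace_eq_zero_of_trace_pow_mul {f g : End K V} (hf : ¬ f.HasEigenvalue 1)
    (h : ∀ l : ℕ, LinearMap.trace K V (f ^ l * g) = LinearMap.trace K V g) :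
    LinearMap.trace K V g = 0 := by
  have key : ∀ q : Polynomial K,
      LinearMap.trace K V (Polynomial.aeval f q * g) = q.eval 1 * LinearMap.trace K V g := by
    intro q
    induction q using Polynomial.induction_on' with
    | add q r hq hr => simp only [map_add, add_mul, hq, hr, Polynomial.eval_add]
    | monomial l a => simp [Polynomial.aeval_monomial, ← Algebra.smul_def, h]
  have hroot : (minpoly K f).eval 1 ≠ 0 := fun h1 => hf (hasEigenvalue_of_isRoot h1)
  simpa [hroot] using (key (minpoly K f)).symm

theorem eq_one_of_pow_eq_one [IsAlgClosed K] {f : End K V} {n : ℕ} (hn : (n : K) ≠ 0)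
    (hfn : f ^ n = 1) (hf : ∀ μ, f.HasEigenvalue μ → μ = 1) : f = 1 := by
  have hss : f.IsSemisimple := by
    refine isSemisimple_of_squarefree_aeval_eq_zero
      (Polynomial.separable_X_pow_sub_C 1 hn one_ne_zero).squarefree ?_
    simp [hfn]
  have htop : f.eigenspace 1 = ⊤ := by
    rw [← hss.iSup_eigenspace_eq_top]
    refine le_antisymm (le_iSup _ 1) (iSup_le fun μ => ?_)
    by_cases hμ : f.HasEigenvalue μ
    · rw [hf μ hμ]
    · simp [not_not.mp (hasEigenvalue_iff.not.mp hμ)]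
  ext v
  simpa using (mem_eigenspace_iff.mp (htop ▸ Submodule.mem_top : v ∈ f.eigenspace 1))

theorem exists_hasEigenvector_of_commute [IsAlgClosed K] {f g : End K V} (hfg : Commute f g)
    {μ : K} (hμ : f.HasEigenvalue μ) :
    ∃ ν v, v ∈ f.eigenspace μ ∧ g.HasEigenvector ν v := by
  have : Nontrivial (f.eigenspace μ) := Submodule.nontrivial_iff_ne_bot.mpr hμ
  obtain ⟨ν, hν⟩ := exists_eigenvalue (g.restrict (mapsTo_genEigenspace_of_comm hfg μ 1))
  obtain ⟨w, hw⟩ := hν.exists_hasEigenvector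
  exact ⟨ν, w, w.2, hw.of_restrict _⟩

end Module.End

namespace LinearMap

theorem trace_eq_trace_restrict_add_of_isCompl {K V : Type*} [Field K] [AddCommGroup V]
    [Module K V] [FiniteDimensional K V] {U W : Submodule K V} (hUW : IsCompl U W)
    {f : Module.End K V} (hU : Set.MapsTo f U U) (hW : Set.MapsTo f W W) :
    trace K V f = trace K U (f.restrict hU) + trace K W (f.restrict hW) := by
  let N : Bool → Submodule K V := fun b => if b then U else W
  have hN : DirectSum.IsInternal N :=
    (DirectSum.isInternal_submodule_iff_isCompl N (i := true) (j := false) (by decide)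
      (by ext b; cases b <;> simp)).mpr hUW
  rw [trace_eq_sum_trace_restrict hN (f := f) (fun b => by cases b <;> assumption),
    Fintype.sum_bool]
  rfl

end LinearMap

namespace Representation

variable {K G V : Type*} [Field K] [Group G] [AddCommGroup V] [Module K V]

def centralEigenspace (ρ : Representation K G V) {c : G} (hc : c ∈ Subgroup.center G) (μ : K) :
    Subrepresentation ρ where
  toSubmodule := Module.End.eigenspace (ρ c) μ
  apply_mem_toSubmodule g v hv := by
    rw [Module.End.mem_eigenspace_iff] at hv ⊢
    rw [← Module.End.mul_apply, ← map_mul, ← (Subgroup.mem_center_iff.mp hc g), map_mul,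
      Module.End.mul_apply, hv, map_smul]

theorem centralEigenspace_apply_self (ρ : Representation K G V) {c : G}
    (hc : c ∈ Subgroup.center G) (μ : K) :
    (ρ.centralEigenspace hc μ).toRepresentation c = μ • 1 := by
  ext v
  exact Module.End.mem_eigenspace_iff.mp v.2

theorem character_eq_add_of_isCompl [FiniteDimensional K V] (ρ : Representation K G V)
    {U W : Subrepresentation ρ} (h : IsCompl U.toSubmodule W.toSubmodule) (g : G) :
    ρ.character g = U.toRepresentation.character g + W.toRepresentation.character g :=
  LinearMap.trace_eq_trace_restrict_add_of_isCompl h (U.apply_mem_toSubmodule g)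
    (W.apply_mem_toSubmodule g)

theorem exists_pow_eq_one_of_hasEigenvalue_of_mul_eq [FiniteDimensional K V]
    (ρ : Representation K G V) {a b c : G} (hc : c ∈ Subgroup.center G) (habc : a * b = c * (b * a))
    {μ : K} (hμ : Module.End.HasEigenvalue (ρ c) μ) :
    ∃ d, 0 < d ∧ d ≤ Module.finrank K V ∧ μ ^ d = 1 := by
  set E := ρ.centralEigenspace hc μ
  have : Nontrivial E.toSubmodule := Submodule.nontrivial_iff_ne_bot.mpr hμ
  refine ⟨Module.finrank K E.toSubmodule, Module.finrank_pos, Submodule.finrank_le _, ?_⟩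
  refine Module.End.pow_finrank_eq_one_of_mul_eq_smul_mul ((Group.isUnit a).map E.toRepresentation)
    ((Group.isUnit b).map E.toRepresentation) ?_
  rw [← map_mul, habc, map_mul, centralEigenspace_apply_self, smul_one_mul, map_mul]

end Representation

section InnerProduct

variable {𝕜 E : Type*} [RCLike 𝕜] [NormedAddCommGroup E] [InnerProductSpace 𝕜 E]

theorem LinearMap.norm_trace_le_finrank [FiniteDimensional 𝕜 E] (f : E →ₗ[𝕜] E)
    (hf : ∀ v, ‖f v‖ ≤ ‖v‖) : ‖trace 𝕜 E f‖ ≤ Module.finrank 𝕜 E := by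
  set b := stdOrthonormalBasis 𝕜 E
  rw [trace_eq_sum_inner f b]
  calc ‖∑ i, ⟪b i, f (b i)⟫_𝕜‖ ≤ ∑ i, ‖⟪b i, f (b i)⟫_𝕜‖ := norm_sum_le _ _
    _ ≤ ∑ _i : Fin (Module.finrank 𝕜 E), (1 : ℝ) := Finset.sum_le_sum fun i _ =>
        (norm_inner_le_norm _ _).trans (by simpa [b.orthonormal.1 i] using hf (b i))
    _ = Module.finrank 𝕜 E := by simp

variable {G : Type*} [Group G] {ρ : Representation 𝕜 G E}

def Subrepresentation.orthogonal (hρ : ∀ g x y, ⟪ρ g x, ρ g y⟫_𝕜 = ⟪x, y⟫_𝕜)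
    (W : Subrepresentation ρ) : Subrepresentation ρ where
  toSubmodule := W.toSubmoduleᗮ
  apply_mem_toSubmodule g v hv := by
    rw [Submodule.mem_orthogonal] at hv ⊢
    intro u hu
    rw [← hρ g⁻¹, ← Module.End.mul_apply, ← map_mul, inv_mul_cancel, map_one,
      Module.End.one_apply]
    exact hv _ (W.apply_mem_toSubmodule g⁻¹ hu)

theorem Subrepresentation.norm_toRepresentation_apply
    (hρ : ∀ g x y, ⟪ρ g x, ρ g y⟫_𝕜 = ⟪x, y⟫_𝕜) (W : Subrepresentation ρ) (g : G)
    (v : W.toSubmodule) : ‖W.toRepresentation g v‖ = ‖v‖ :=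
  (LinearMap.norm_map_iff_inner_map_map (ρ g)).mpr (hρ g) v

end InnerProduct

section EuclideanRep

variable {G ι 𝕜 : Type*} [Group G] [Fintype ι] [DecidableEq ι] [RCLike 𝕜]

noncomputable def Matrix.euclideanRep (π : G →* Matrix.unitaryGroup ι 𝕜) :
    Representation 𝕜 G (EuclideanSpace 𝕜 ι) where
  toFun g := Matrix.toEuclideanCLM (n := ι) (𝕜 := 𝕜) (π g)
  map_one' := by simp
  map_mul' g h := by simp

theorem Matrix.inner_euclideanRep_apply (π : G →* Matrix.unitaryGroup ι 𝕜) (g : G)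
    (x y : EuclideanSpace 𝕜 ι) :
    ⟪Matrix.euclideanRep π g x, Matrix.euclideanRep π g y⟫_𝕜 = ⟪x, y⟫_𝕜 :=
  ContinuousLinearMap.inner_map_map_of_mem_unitary
    (Unitary.map_mem Matrix.toEuclideanCLM (π g).2) x y

theorem Matrix.character_euclideanRep (π : G →* Matrix.unitaryGroup ι 𝕜) (g : G) :
    (Matrix.euclideanRep π).character g = (π g : Matrix ι ι 𝕜).trace := by
  rw [Representation.character, LinearMap.trace_eq_matrix_trace 𝕜 (PiLp.basisFun 2 𝕜 ι)]
  exact congrArg Matrix.trace (LinearMap.toMatrix_toLin _ _ _)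

end EuclideanRep

-- The case split only matters for `p = 0`, where `(p : ℚ) ^ m` may vanish.
def Zp.invPow (p m : ℕ) : Zp p :=
  ⟨((p : ℚ) ^ m)⁻¹, if (p : ℚ) ^ m = 0 then 0 else 1, m, by split_ifs with h <;> simp [h]⟩

namespace Gp

variable {p : ℕ}

def z (m : ℕ) : Gp p := (Zp.invPow p m, 0, 0)

def w (m : ℕ) : Gp p := (0, Zp.invPow p m, 0)

def t : Gp p := (0, 0, 1)

theorem mul_def (x y : Gp p) :
    x * y = (x.1 + y.1 + x.2.2 • y.2.1, x.2.1 + y.2.1, x.2.2 + y.2.2) := rfl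

theorem z_mem_center (m : ℕ) : (z m : Gp p) ∈ Subgroup.center (Gp p) :=
  Subgroup.mem_center_iff.mpr fun g => by simp [mul_def, z, add_comm]

theorem mk_zero_zero_pow (a : Zp p) (n : ℕ) : ((a, 0, 0) : Gp p) ^ n = (n • a, 0, 0) := by
  induction n with
  | zero => simp only [pow_zero, zero_nsmul]; rfl
  | succ n ih => simp [pow_succ, ih, mul_def, succ_nsmul]

theorem z_add_pow [NeZero p] (m k : ℕ) : (z (m + k) : Gp p) ^ p ^ k = z m := by
  rw [z, mk_zero_zero_pow, z]
  congr 1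
  ext
  have : (p : ℚ) ≠ 0 := NeZero.ne _
  simp only [Zp.invPow, pow_add, mul_inv_rev, AddSubmonoidClass.mk_nsmul, nsmul_eq_mul,
    Nat.cast_pow]
  field_simp

theorem z_succ_pow [NeZero p] (m : ℕ) : (z (m + 1) : Gp p) ^ p = z m := by
  simpa using z_add_pow (p := p) m 1

theorem t_mul_w (m : ℕ) : (t : Gp p) * w m = z m * (w m * t) := by
  simp [mul_def, t, w, z]

theorem t_pow_mul_w_mul_inv (l m : ℕ) : (t : Gp p) ^ l * w m * (t ^ l)⁻¹ = z m ^ l * w m := by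
  induction l with
  | zero => simp
  | succ l ih =>
    calc t ^ (l + 1) * w m * (t ^ (l + 1))⁻¹ = t * (t ^ l * w m * (t ^ l)⁻¹) * t⁻¹ := by group
      _ = z m ^ l * (t * w m * t⁻¹) := by
        have hc := Subgroup.mem_center_iff.mp (pow_mem (z_mem_center (p := p) m) l) t
        rw [ih, ← mul_assoc t, hc]
        simp only [mul_assoc]
      _ = z m ^ (l + 1) * w m := by rw [t_mul_w]; group

theorem w_zero_mem_HpSet : (w 0 : Gp p) ∈ HpSet p :=
  ⟨⟨0, rfl⟩, ⟨1, by simp [w, Zp.invPow]⟩, rfl⟩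

theorem z_one_notMem_HpSet (hp : 1 < p) : (z 1 : Gp p) ∉ HpSet p := by
  rintro ⟨⟨k, hk⟩, -⟩
  have hp' : (1 : ℚ) < p := by exact_mod_cast hp
  have h0 : (0 : ℚ) < k := by simpa [z, Zp.invPow, ← hk] using zero_lt_one.trans hp'
  have h1 : (k : ℚ) < 1 := by simpa [z, Zp.invPow, ← hk] using inv_lt_one_of_one_lt₀ hp'
  norm_cast at h0 h1
  omega

open Module Module.End

variable {V : Type*} [AddCommGroup V]

theorem character_w_zero_eq_zero {K : Type*} [Field K] [Module K V] [FiniteDimensional K V]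
    (σ : Representation K (Gp p) V) (h : ¬ HasEigenvalue (σ (z 0)) 1) :
    σ.character (w 0) = 0 :=
  trace_eq_zero_of_trace_pow_mul h fun l => by
    rw [← map_pow, ← map_mul, ← t_pow_mul_w_mul_inv]
    exact σ.char_conj _ _

variable [Module ℂ V] [FiniteDimensional ℂ V] [hp : Fact p.Prime]

theorem eq_one_of_hasEigenvalue_z_one (ρ : Representation ℂ (Gp p) V) {μ : ℂ}
    (hμ : HasEigenvalue (ρ (z 1)) μ) (hμp : μ ^ p = 1) : μ = 1 := by
  set s := finrank ℂ V
  have hcomm : Commute (ρ (z 1)) (ρ (z (1 + s))) :=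
    Commute.map (Subgroup.mem_center_iff.mp (z_mem_center (1 + s)) (z 1)) ρ
  obtain ⟨ν, v, hv, hν⟩ := exists_hasEigenvector_of_commute hcomm hμ
  have hνμ : ν ^ p ^ s = μ := by
    have h := hν.pow_apply (p ^ s)
    rw [← map_pow, z_add_pow, mem_eigenspace_iff.mp hv] at h
    exact (smul_left_injective ℂ hν.2 h).symm
  obtain ⟨d, hd, hds, hνd⟩ :=
    ρ.exists_pow_eq_one_of_hasEigenvalue_of_mul_eq (z_mem_center _) (t_mul_w _)
      (hasEigenvalue_of_hasEigenvector hν)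
  rw [← hνμ]
  exact pow_prime_pow_eq_one_of_pow_eq_one hp.out (n := s + 1)
    (by rw [pow_succ, pow_mul, hνμ, hμp]) hd hνd (hds.trans_lt (Nat.lt_pow_self hp.out.one_lt))

theorem centralEigenspace_z_zero_apply_z_one (ρ : Representation ℂ (Gp p) V) :
    (ρ.centralEigenspace (z_mem_center 0) 1).toRepresentation (z 1) = 1 := by
  set σ := (ρ.centralEigenspace (z_mem_center 0) 1).toRepresentation
  have hpow : σ (z 1) ^ p = 1 := by
    rw [← map_pow, z_succ_pow, Representation.centralEigenspace_apply_self, one_smul]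
  refine eq_one_of_pow_eq_one (Nat.cast_ne_zero.mpr hp.out.ne_zero) hpow fun μ hμ => ?_
  obtain ⟨u, hu⟩ := hμ.exists_hasEigenvector
  have hμp : μ ^ p = 1 := by
    have h := hu.pow_apply p
    rw [hpow, Module.End.one_apply] at h
    exact smul_left_injective ℂ hu.2 (h.symm.trans (one_smul ℂ u).symm)
  exact eq_one_of_hasEigenvalue_z_one ρ (hasEigenvalue_of_hasEigenvector
    (hu.of_restrict (Subrepresentation.apply_mem_toSubmodule _ (z 1)))) hμp

variable {E : Type*} [NormedAddCommGroup E] [InnerProductSpace ℂ E]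
  [FiniteDimensional ℂ E]

theorem two_mul_norm_character_sub_finrank_le (ρ : Representation ℂ (Gp p) E)
    (hρ : ∀ g x y, ⟪ρ g x, ρ g y⟫_ℂ = ⟪x, y⟫_ℂ) :
    2 * ‖ρ.character (w 0)‖ - finrank ℂ E ≤ (ρ.character (z 1)).re := by
  set U := ρ.centralEigenspace (z_mem_center 0) 1
  set W := U.orthogonal hρ
  have hUW : IsCompl U.toSubmodule W.toSubmodule := U.toSubmodule.isCompl_orthogonal
  have hWw : W.toRepresentation.character (w 0) = 0 := by
    refine character_w_zero_eq_zero _ fun h => ?_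
    obtain ⟨u, hu⟩ := h.exists_hasEigenvector
    have hU : (u : E) ∈ U.toSubmodule :=
      (hu.of_restrict (W.apply_mem_toSubmodule (z 0))).1
    exact hu.2 (Subtype.ext (Submodule.disjoint_def.mp hUW.disjoint _ hU u.2))
  have hUz : U.toRepresentation.character (z 1) = finrank ℂ U.toSubmodule := by
    rw [Representation.character, centralEigenspace_z_zero_apply_z_one, LinearMap.trace_one]
  have hUw : ‖U.toRepresentation.character (w 0)‖ ≤ finrank ℂ U.toSubmodule :=
    LinearMap.norm_trace_le_finrank _ (U.norm_toRepresentation_apply hρ (w 0) · |>.le)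
  have hWz : ‖W.toRepresentation.character (z 1)‖ ≤ finrank ℂ W.toSubmodule :=
    LinearMap.norm_trace_le_finrank _ (W.norm_toRepresentation_apply hρ (z 1) · |>.le)
  have hdim : (finrank ℂ U.toSubmodule + finrank ℂ W.toSubmodule : ℝ) = finrank ℂ E := by
    exact_mod_cast U.toSubmodule.finrank_add_finrank_orthogonal
  rw [ρ.character_eq_add_of_isCompl hUW, ρ.character_eq_add_of_isCompl hUW, hWw, add_zero, hUz,
    Complex.add_re, Complex.natCast_re]
  have := neg_le_of_abs_le ((Complex.abs_re_le_norm _).trans hWz)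
  linarith

theorem two_mul_norm_trN_sub_one_le {n : ℕ} (hn : 0 < n)
    (π : Gp p →* Matrix.unitaryGroup (Fin n) ℂ) :
    2 * ‖trN n (π (w 0))‖ - 1 ≤ (trN n (π (z 1))).re := by
  have h := two_mul_norm_character_sub_finrank_le _ (Matrix.inner_euclideanRep_apply π)
  rw [Matrix.character_euclideanRep, Matrix.character_euclideanRep, finrank_euclideanSpace_fin] at h
  have hn' : (0 : ℝ) < n := by exact_mod_cast hn
  simp only [trN, norm_div, Complex.norm_natCast, Complex.div_natCast_re]
  rw [le_div_iff₀ hn']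
  calc (2 * (‖(π (w 0) : Matrix (Fin n) (Fin n) ℂ).trace‖ / n) - 1) * n
      = 2 * ‖(π (w 0) : Matrix (Fin n) (Fin n) ℂ).trace‖ - n := by field_simp
    _ ≤ _ := h

end Gp

/-- the trace `τ = 1_{H_p}` on `G_p` is not a pointwise limit of
finite-dimensional traces. -/
theorem Hp_trace_not_limit_of_fd_traces (p : ℕ) (hp : p.Prime) :
    ¬ ∃ (n : ℕ → ℕ) (π : ∀ k, Gp p →* Matrix.unitaryGroup (Fin (n k)) ℂ),
        (∀ k, 0 < n k) ∧
        ∀ g : Gp p,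
          (g ∈ HpSet p → Tendsto (fun k => trN (n k) (π k g)) atTop (nhds 1)) ∧
          (g ∉ HpSet p → Tendsto (fun k => trN (n k) (π k g)) atTop (nhds 0)) := by
  rintro ⟨n, π, hn, hlim⟩
  have := Fact.mk hp
  have hw := (hlim (Gp.w 0)).1 Gp.w_zero_mem_HpSet
  have hz := (hlim (Gp.z 1)).2 (Gp.z_one_notMem_HpSet hp.one_lt)
  have hlimit := le_of_tendsto_of_tendsto' ((hw.norm.const_mul 2).sub_const 1)
    ((Complex.continuous_re.tendsto 0).comp hz) fun k => Gp.two_mul_norm_trN_sub_one_le (hn k) (π k)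
  norm_num at hlimit
end

section
/- Let p be a prime, let X be the Pontryagin dual of the discrete abelian group ℤ[1/p]², and let α̂ be the homeomorphic automorphism of X dual to α(a,b) = (a+b,b), i.e., α̂(χ) = χ∘α. Then the set of periodic points of α̂, namely {χ ∈ X : α̂^m(χ) = χ for some integer m ≥ 1}, is dense in X. -/
open MeasureTheory

/-- The Pontryagin dual of the discrete abelian group `ℤ[1/p]²`: the group of characters
with values in the circle group. -/
abbrev Xp (p : ℕ) : Type := AddChar (Zp p × Zp p) Circle

/-- The topology of pointwise convergence on the dual. -/
noncomputable instance (p : ℕ) : TopologicalSpace (Xp p) :=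
  TopologicalSpace.induced (fun χ : Xp p => (χ : Zp p × Zp p → Circle)) Pi.topologicalSpace

noncomputable instance (p : ℕ) : MeasurableSpace (Xp p) := borel (Xp p)

instance (p : ℕ) : BorelSpace (Xp p) := ⟨rfl⟩

/-- The automorphism `α(a,b) = (a+b, b)` of `ℤ[1/p]²`, as an additive monoid hom. -/
def alphaHom (p : ℕ) : Zp p × Zp p →+ Zp p × Zp p where
  toFun x := (x.1 + x.2, x.2)
  map_zero' := by
    refine Prod.ext ?_ rfl
    show (0 : Zp p) + 0 = 0
    simp
  map_add' x y := by
    refine Prod.ext ?_ rfl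
    show x.1 + y.1 + (x.2 + y.2) = x.1 + x.2 + (y.1 + y.2)
    abel

/-- The dual action `α̂(χ) = χ ∘ α` on the dual group. -/
noncomputable def alphaHat (p : ℕ) : Xp p → Xp p :=
  fun χ => χ.compAddMonoidHom (alphaHom p)

open Filter Topology

theorem Topology.IsInducing.mem_closure_of_forall_finset_tendsto {X ι β : Type*}
    [TopologicalSpace X] [TopologicalSpace β] {f : X → ι → β} (hf : IsInducing f)
    {S : Set X} {x : X}
    (h : ∀ I : Finset ι, ∃ y : ℕ → X, (∀ k, y k ∈ S) ∧
      ∀ i ∈ I, Tendsto (fun k => f (y k) i) atTop (𝓝 (f x i))) :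
    x ∈ closure S := by
  rw [hf.closure_eq_preimage_closure_image, Set.mem_preimage, mem_closure_iff_nhds]
  intro U hU
  rw [nhds_pi] at hU
  obtain ⟨I, t, ht, htU⟩ := Filter.mem_pi'.1 hU
  obtain ⟨y, hyS, hy⟩ := h I
  obtain ⟨k, hk⟩ := ((eventually_all_finset I).2 fun i hi => hy i hi (ht i)).exists
  exact ⟨f (y k), htU fun i hi => hk i hi, Set.mem_image_of_mem f (hyS k)⟩

theorem AddChar.tendsto_apply_of_mem_zmultiples {ι A G : Type*} [AddGroup A] [CommGroup G]
    [TopologicalSpace G] [IsTopologicalGroup G] {l : Filter ι} {φ : ι → AddChar A G}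
    {χ : AddChar A G} {g a : A} (hg : Tendsto (fun k => φ k g) l (𝓝 (χ g)))
    (ha : a ∈ AddSubgroup.zmultiples g) : Tendsto (fun k => φ k a) l (𝓝 (χ a)) := by
  obtain ⟨c, rfl⟩ := ha
  simpa only [AddChar.map_zsmul_eq_zpow] using hg.zpow c

theorem ZMod.exists_tendsto_toCircle (z : Circle) {ℓ : ℕ → ℕ} [∀ k, NeZero (ℓ k)]
    (hℓ : Tendsto ℓ atTop atTop) :
    ∃ r : ∀ k, ZMod (ℓ k), Tendsto (fun k => ZMod.toCircle (r k)) atTop (𝓝 z) := by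
  -- shifted by `2π` so that the angle is nonnegative and the natural floor applies
  set s := (Complex.arg z + 2 * Real.pi) / (2 * Real.pi)
  have hs : 0 ≤ s :=
    div_nonneg (by linarith [Complex.neg_pi_lt_arg (z : ℂ), Real.pi_pos]) (by positivity)
  have hz : Circle.exp (2 * Real.pi * s) = z := by
    rw [mul_div_cancel₀ _ (by positivity), Circle.exp_add_two_pi, Circle.exp_arg]
  refine ⟨fun k => (⌊s * ℓ k⌋₊ : ZMod (ℓ k)), ?_⟩
  have hlim : Tendsto (fun k => (⌊s * ℓ k⌋₊ : ℝ) / ℓ k) atTop (𝓝 s) :=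
    (tendsto_nat_floor_mul_div_atTop hs).comp (tendsto_natCast_atTop_atTop.comp hℓ)
  rw [← hz]
  refine ((Circle.exp.continuous.tendsto _).comp (hlim.const_mul (2 * Real.pi))).congr fun k => ?_
  apply Circle.ext
  simp only [Function.comp_apply, Circle.coe_exp, ZMod.toCircle_natCast]
  push_cast
  ring_nf

namespace AddChar

variable {A B M : Type*} [AddMonoid A] [AddMonoid B] [CommMonoid M]

def replaceFst (χ : AddChar (A × B) M) (φ : AddChar A M) : AddChar (A × B) M :=
  φ.compAddMonoidHom (AddMonoidHom.fst A B) *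
    χ.compAddMonoidHom ((AddMonoidHom.inr A B).comp (AddMonoidHom.snd A B))

@[simp]
theorem replaceFst_apply (χ : AddChar (A × B) M) (φ : AddChar A M) (x : A × B) :
    χ.replaceFst φ x = φ x.1 * χ (0, x.2) := rfl

theorem map_inl_mul_map_inr (χ : AddChar (A × B) M) (x : A × B) :
    χ (x.1, 0) * χ (0, x.2) = χ x := by
  rw [← map_add_eq_mul, Prod.mk_add_mk, add_zero, zero_add]

end AddChar

namespace Zp

variable {p : ℕ}

theorem den_dvd_pow (hp : p ≠ 0) (x : Zp p) : ∃ n, (x : ℚ).den ∣ p ^ n := by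
  obtain ⟨k, n, h⟩ := x.2
  refine ⟨n, Int.natCast_dvd_natCast.1 ?_⟩
  have hx : (x : ℚ) = Rat.divInt k (p ^ n : ℕ) := by
    rw [Rat.divInt_eq_div, ← h]
    push_cast
    field_simp
  simpa [hx] using Rat.den_dvd k (p ^ n : ℕ)

theorem cast_den_ne_zero {K : Type*} [DivisionRing K] (hp : (p : K) ≠ 0) (x : Zp p) :
    ((x : ℚ).den : K) ≠ 0 := by
  obtain ⟨n, e, he⟩ := den_dvd_pow (by rintro rfl; simp at hp) x
  intro h0
  apply pow_ne_zero n hp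
  rw [← Nat.cast_pow, he, Nat.cast_mul, h0, zero_mul]

def castHom (K : Type*) [DivisionRing K] (hp : (p : K) ≠ 0) : Zp p →+ K where
  toFun x := ((x : ℚ) : K)
  map_zero' := by simp
  map_add' x y := Rat.cast_add_of_ne_zero (cast_den_ne_zero hp x) (cast_den_ne_zero hp y)

theorem castHom_apply {K : Type*} [DivisionRing K] (hp : (p : K) ≠ 0) (x : Zp p) :
    castHom K hp x = ((x : ℚ) : K) := rfl

variable (p) [NeZero p]

def invPow_s12 (n : ℕ) : Zp p := ⟨((p : ℚ) ^ n)⁻¹, 1, n, by simp [NeZero.ne p]⟩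

@[simp]
theorem coe_invPow (n : ℕ) : (invPow_s12 p n : ℚ) = ((p : ℚ) ^ n)⁻¹ := rfl

theorem eventually_mem_zmultiples_invPow (x : Zp p) :
    ∀ᶠ n in atTop, x ∈ AddSubgroup.zmultiples (invPow_s12 p n) := by
  obtain ⟨k, m, h⟩ := x.2
  refine eventually_atTop.2 ⟨m, fun n hn => ⟨k * p ^ (n - m), Subtype.ext ?_⟩⟩
  have hp : (p : ℚ) ≠ 0 := Nat.cast_ne_zero.2 (NeZero.ne p)
  simp only [AddSubgroup.coe_zsmul, coe_invPow, zsmul_eq_mul]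
  push_cast
  rw [← h, ← pow_sub_mul_pow (p : ℚ) hn]
  field_simp

theorem castHom_invPow_ne_zero {K : Type*} [DivisionRing K] (hp : (p : K) ≠ 0) (n : ℕ) :
    castHom K hp (invPow_s12 p n) ≠ 0 := by
  rw [castHom_apply, coe_invPow, ← Nat.cast_pow, Rat.cast_inv_nat, Nat.cast_pow]
  exact inv_ne_zero (pow_ne_zero n hp)

theorem exists_addChar_map_nsmul_eq_one (ℓ : ℕ) [Fact ℓ.Prime] (hp : (p : ZMod ℓ) ≠ 0)
    (n : ℕ) (r : ZMod ℓ) :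
    ∃ φ : AddChar (Zp p) Circle, (∀ x, φ (ℓ • x) = 1) ∧ φ (invPow_s12 p n) = ZMod.toCircle r := by
  set c := r * (castHom (ZMod ℓ) hp (invPow_s12 p n))⁻¹
  refine ⟨ZMod.toCircle.compAddMonoidHom ((AddMonoidHom.mulLeft c).comp (castHom _ hp)),
    fun x => ?_, ?_⟩
  · simp [map_nsmul]
  · simp [c, castHom_invPow_ne_zero p hp]

end Zp

theorem Xp.isInducing_coe (p : ℕ) :
    IsInducing (fun χ : Xp p => (χ : Zp p × Zp p → Circle)) :=
  ⟨rfl⟩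

theorem alphaHat_iterate_apply {p : ℕ} (χ : Xp p) (n : ℕ) (x : Zp p × Zp p) :
    ((alphaHat p)^[n] χ) x = χ (x.1 + n • x.2, x.2) := by
  induction n generalizing χ with
  | zero => simp
  | succ n ih =>
    rw [Function.iterate_succ_apply, ih]
    change χ (x.1 + n • x.2 + x.2, x.2) = _
    rw [add_assoc, ← succ_nsmul]

theorem alphaHat_iterate_replaceFst {p n : ℕ} {φ : AddChar (Zp p) Circle}
    (hφ : ∀ a, φ (n • a) = 1) (χ : Xp p) :
    (alphaHat p)^[n] (χ.replaceFst φ) = χ.replaceFst φ := by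
  ext x
  simp [alphaHat_iterate_apply, AddChar.map_add_eq_mul, hφ]

/-- the periodic points of the dual action `α̂` are dense in the dual
of `ℤ[1/p]²`. -/
theorem dense_periodic_points (p : ℕ) (hp : p.Prime) :
    Dense {χ : Xp p | ∃ m : ℕ, 1 ≤ m ∧ (alphaHat p)^[m] χ = χ} := by
  have : NeZero p := ⟨hp.ne_zero⟩
  intro χ
  refine (Xp.isInducing_coe p).mem_closure_of_forall_finset_tendsto fun I => ?_
  obtain ⟨n, hn⟩ :=
    ((eventually_all_finset I).2 fun x _ => Zp.eventually_mem_zmultiples_invPow p x.1).exists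
  choose ℓ hℓ hℓ_prime using fun k => Nat.exists_infinite_primes (k + p + 1)
  have := fun k => Fact.mk (hℓ_prime k)
  have hpℓ : ∀ k, (p : ZMod (ℓ k)) ≠ 0 := fun k hk => by
    have := Nat.le_of_dvd hp.pos ((ZMod.natCast_eq_zero_iff p (ℓ k)).1 hk)
    have := hℓ k
    omega
  obtain ⟨r, hr⟩ := ZMod.exists_tendsto_toCircle (χ (Zp.invPow_s12 p n, 0))
    (tendsto_atTop_mono (fun k => (by have := hℓ k; omega : k ≤ ℓ k)) tendsto_id)
  choose φ hφ_periodic hφ_invPow using fun k =>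
    Zp.exists_addChar_map_nsmul_eq_one p (ℓ k) (hpℓ k) n (r k)
  refine ⟨fun k => χ.replaceFst (φ k),
    fun k => ⟨ℓ k, (hℓ_prime k).one_lt.le, alphaHat_iterate_replaceFst (hφ_periodic k) χ⟩,
    fun x hx => ?_⟩
  have hfst := AddChar.tendsto_apply_of_mem_zmultiples
    (χ := χ.compAddMonoidHom (AddMonoidHom.inl _ _)) (hr.congr fun k => (hφ_invPow k).symm)
    (hn x hx)
  simpa only [AddChar.replaceFst_apply, AddChar.compAddMonoidHom_apply, AddMonoidHom.inl_apply,
    AddChar.map_inl_mul_map_inr] using hfst.mul_const (χ (0, x.2))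
end
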